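/- arXiv:2509.08597 — 8 statements merged into one kernel-verified Lean document; each statement's English description precedes it below -/
import Mathlib

section
/- The function F ↦ ‖F·Fᵀ‖² on real 3×3 matrices is strictly convex; more precisely, it is twice differentiable and its second derivative in any direction H ≠ 0 satisfies ⟨D²_F(‖F Fᵀ‖²).H, H⟩ = 2‖F Hᵀ + H Fᵀ‖² + 4⟨F Fᵀ, H Hᵀ⟩ > 0 for every real 3×3 matrix F invertible with det F > 0 and every nonzero real 3×3 matrix H. -/
/-!
Along the line `t ↦ F + t H` the Gram matrix `F Fᵀ` becomes `A + t B + t² C` with `A = F Fᵀ`,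
`B = F Hᵀ + H Fᵀ`, `C = H Hᵀ`, so `‖F Fᵀ‖²` is a quartic polynomial in `t` whose second
derivative at `0` is twice its `t²`-coefficient `‖B‖² + 2⟨A, C⟩`. Positivity comes from
`⟨F Fᵀ, H Hᵀ⟩ = ‖Hᵀ F‖²`, which is nonzero when `F` is invertible and `H ≠ 0`.
-/

open Matrix

noncomputable section

attribute [local instance] Matrix.frobeniusNormedAddCommGroup Matrix.frobeniusNormedSpace

/-- Frobenius inner product of two real 3×3 matrices: `⟨X, Y⟩ = tr (X Yᵀ)`. -/
def finner (X Y : Matrix (Fin 3) (Fin 3) ℝ) : ℝ :=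
  (X * Yᵀ).trace

theorem iteratedFDeriv_apply_const_eq_iteratedDeriv_line {𝕜 E F : Type*}
    [NontriviallyNormedField 𝕜] [NormedAddCommGroup E] [NormedSpace 𝕜 E]
    [NormedAddCommGroup F] [NormedSpace 𝕜 F] {n : WithTop ℕ∞} {k : ℕ} {f : E → F}
    (hf : ContDiff 𝕜 n f) (hk : k ≤ n) (x h : E) :
    iteratedFDeriv 𝕜 k f x (fun _ => h) = iteratedDeriv k (fun t : 𝕜 => f (x + t • h)) 0 := by
  have hline : (fun t : 𝕜 => f (x + t • h)) =
      (fun y => f (x + y)) ∘ ContinuousLinearMap.toSpanSingleton 𝕜 h := rfl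
  have hshift : ContDiff 𝕜 n fun y => f (x + y) := hf.comp (contDiff_const.add contDiff_id)
  rw [iteratedDeriv_eq_iteratedFDeriv, hline,
    ContinuousLinearMap.iteratedFDeriv_comp_right _ hshift _ hk]
  simp [iteratedFDeriv_comp_add_left]

theorem iteratedDeriv_two_quartic_zero {𝕜 : Type*} [NontriviallyNormedField 𝕜] (a b c d e : 𝕜) :
    iteratedDeriv 2 (fun t => a + b * t + c * t ^ 2 + d * t ^ 3 + e * t ^ 4) 0 = 2 * c := by
  have h1 : deriv (fun t => a + b * t + c * t ^ 2 + d * t ^ 3 + e * t ^ 4) =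
      fun t => b + 2 * c * t + 3 * d * t ^ 2 + 4 * e * t ^ 3 := by
    funext t
    exact (((((hasDerivAt_const t a).add ((hasDerivAt_id t).const_mul b)).add
      ((hasDerivAt_pow 2 t).const_mul c)).add ((hasDerivAt_pow 3 t).const_mul d)).add
      ((hasDerivAt_pow 4 t).const_mul e)).deriv.trans (by ring)
  have h2 : deriv (fun t => b + 2 * c * t + 3 * d * t ^ 2 + 4 * e * t ^ 3) 0 = 2 * c :=
    ((((hasDerivAt_const (0 : 𝕜) b).add ((hasDerivAt_id (0 : 𝕜)).const_mul (2 * c))).add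
      ((hasDerivAt_pow 2 (0 : 𝕜)).const_mul (3 * d))).add
      ((hasDerivAt_pow 3 (0 : 𝕜)).const_mul (4 * e))).deriv.trans (by simp)
  rw [iteratedDeriv_succ, iteratedDeriv_one, h1, h2]

theorem LinearMap.BilinForm.IsSymm.apply_add_smul_add_pow_smul {R M : Type*} [CommRing R]
    [AddCommGroup M] [Module R M] {β : LinearMap.BilinForm R M} (hβ : β.IsSymm) (A B C : M)
    (t : R) :
    β (A + t • B + t ^ 2 • C) (A + t • B + t ^ 2 • C) =
      β A A + 2 * β A B * t + (β B B + 2 * β A C) * t ^ 2 + 2 * β B C * t ^ 3 +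
        β C C * t ^ 4 := by
  simp only [map_add, map_smul, LinearMap.add_apply, LinearMap.smul_apply, smul_eq_mul,
    hβ.eq B A, hβ.eq C A, hβ.eq C B]
  ring

section Gram

variable {m n R : Type*} [Fintype n]

def mulTransposeBilin [CommRing R] : Matrix m n R →ₗ[R] Matrix m n R →ₗ[R] Matrix m m R :=
  LinearMap.mk₂ R (fun X Y => X * Yᵀ) (fun _ _ _ => Matrix.add_mul _ _ _)
    (fun _ _ _ => Matrix.smul_mul _ _ _)
    (fun _ _ _ => by rw [transpose_add, Matrix.mul_add])
    (fun _ _ _ => by rw [transpose_smul, Matrix.mul_smul])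

def frobeniusForm [Fintype m] [CommRing R] : LinearMap.BilinForm R (Matrix m n R) :=
  mulTransposeBilin.compr₂ (traceLinearMap m R R)

@[simp] lemma frobeniusForm_apply [Fintype m] [CommRing R] (X Y : Matrix m n R) :
    frobeniusForm X Y = (X * Yᵀ).trace := rfl

lemma frobeniusForm_isSymm [Fintype m] [CommRing R] :
    (frobeniusForm : LinearMap.BilinForm R (Matrix m n R)).IsSymm :=
  ⟨fun X Y => by
    rw [frobeniusForm_apply, frobeniusForm_apply, ← trace_transpose, transpose_mul,
      transpose_transpose]⟩

lemma mul_transpose_add_smul [CommRing R] (F H : Matrix m n R) (t : R) :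
    (F + t • H) * (F + t • H)ᵀ = F * Fᵀ + t • (F * Hᵀ + H * Fᵀ) + t ^ 2 • (H * Hᵀ) := by
  simp only [transpose_add, transpose_smul, Matrix.add_mul, Matrix.mul_add, Matrix.smul_mul,
    Matrix.mul_smul, smul_smul, smul_add]
  module

lemma trace_mul_transpose_gram [Fintype m] [CommRing R] (F H : Matrix m n R) :
    (F * Fᵀ * (H * Hᵀ)ᵀ).trace = (Hᵀ * F * (Hᵀ * F)ᵀ).trace := by
  simp only [transpose_mul, transpose_transpose, Matrix.mul_assoc]
  rw [trace_mul_comm Hᵀ, Matrix.mul_assoc, Matrix.mul_assoc]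

lemma trace_mul_transpose_self_nonneg [Fintype m] (X : Matrix m n ℝ) : 0 ≤ (X * Xᵀ).trace := by
  simpa [conjTranspose_eq_transpose_of_trivial] using
    (posSemidef_self_mul_conjTranspose X).trace_nonneg

lemma trace_mul_transpose_self_pos [Fintype m] {X : Matrix m n ℝ} (hX : X ≠ 0) :
    0 < (X * Xᵀ).trace := by
  refine (trace_mul_transpose_self_nonneg X).lt_of_ne' fun h => hX ?_
  simpa [conjTranspose_eq_transpose_of_trivial] using
    trace_mul_conjTranspose_self_eq_zero_iff.mp h

lemma trace_mul_transpose_gram_pos [DecidableEq n] {F H : Matrix n n ℝ} (hF : IsUnit F)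
    (hH : H ≠ 0) : 0 < (F * Fᵀ * (H * Hᵀ)ᵀ).trace := by
  rw [trace_mul_transpose_gram]
  exact trace_mul_transpose_self_pos fun h => hH (by simpa using (hF.mul_left_eq_zero.mp h))

theorem contDiff_trace_gram_sq [Fintype m] {k : WithTop ℕ∞} :
    ContDiff ℝ k fun F : Matrix m n ℝ => (F * Fᵀ * (F * Fᵀ)ᵀ).trace := by
  let gramL : Matrix m n ℝ →L[ℝ] Matrix m n ℝ →L[ℝ] Matrix m m ℝ :=
    mulTransposeBilin.toContinuousBilinearMap
  let frobeniusL : Matrix m m ℝ →L[ℝ] Matrix m m ℝ →L[ℝ] ℝ := frobeniusForm.toContinuousBilinearMap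
  have hgram : ContDiff ℝ k fun F : Matrix m n ℝ => F * Fᵀ := gramL.contDiff.clm_apply contDiff_id
  exact (frobeniusL.contDiff.comp hgram).clm_apply hgram

theorem iteratedFDeriv_two_trace_gram_sq [Fintype m] (F H : Matrix m n ℝ) :
    iteratedFDeriv ℝ 2 (fun F : Matrix m n ℝ => (F * Fᵀ * (F * Fᵀ)ᵀ).trace) F (fun _ => H) =
      2 * ((F * Hᵀ + H * Fᵀ) * (F * Hᵀ + H * Fᵀ)ᵀ).trace + 4 * (F * Fᵀ * (H * Hᵀ)ᵀ).trace := by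
  rw [iteratedFDeriv_apply_const_eq_iteratedDeriv_line contDiff_trace_gram_sq le_rfl]
  have hpath := fun t : ℝ => frobeniusForm_isSymm.apply_add_smul_add_pow_smul
    (F * Fᵀ) (F * Hᵀ + H * Fᵀ) (H * Hᵀ) t
  simp only [frobeniusForm_apply, ← mul_transpose_add_smul] at hpath
  rw [funext hpath, iteratedDeriv_two_quartic_zero]
  ring

end Gram

theorem stmt_2 :
    ContDiff ℝ 2 (fun F : Matrix (Fin 3) (Fin 3) ℝ => finner (F * Fᵀ) (F * Fᵀ)) ∧
    ∀ F H : Matrix (Fin 3) (Fin 3) ℝ, 0 < F.det → H ≠ 0 →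
      iteratedFDeriv ℝ 2 (fun F : Matrix (Fin 3) (Fin 3) ℝ => finner (F * Fᵀ) (F * Fᵀ)) F
          ![H, H] =
        2 * finner (F * Hᵀ + H * Fᵀ) (F * Hᵀ + H * Fᵀ) + 4 * finner (F * Fᵀ) (H * Hᵀ) ∧
      0 < 2 * finner (F * Hᵀ + H * Fᵀ) (F * Hᵀ + H * Fᵀ) + 4 * finner (F * Fᵀ) (H * Hᵀ) := by
  refine ⟨contDiff_trace_gram_sq, fun F H hdet hH => ⟨?_, ?_⟩⟩
  · rw [show ![H, H] = fun _ => H from funext fun i => by fin_cases i <;> rfl]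
    exact iteratedFDeriv_two_trace_gram_sq F H
  · have hF : IsUnit F := (isUnit_iff_isUnit_det F).mpr hdet.ne'.isUnit
    have hsq : 0 ≤ finner (F * Hᵀ + H * Fᵀ) (F * Hᵀ + H * Fᵀ) :=
      trace_mul_transpose_self_nonneg _
    have hmixed : 0 < finner (F * Fᵀ) (H * Hᵀ) := trace_mul_transpose_gram_pos hF hH
    linarith
end
end

section
/- Let λ₁, λ₂, λ₃ > 0 and let M be the symmetric 3×3 real matrix with entries Mᵢⱼ = (λ₁² + λ₂² + λ₃²)·λᵢ²·δᵢⱼ − λᵢ²·λⱼ², i.e. M has diagonal entries λᵢ²·(sum of the squares of the other two λ's) and off-diagonal entries −λᵢ²λⱼ². Then M is positive semidefinite, det M = 0, and for a vector h ∈ ℝ³ one has ⟨M h, h⟩ = 0 if and only if h₁ = h₂ = h₃ (i.e. the kernel of the quadratic form is exactly the span of (1,1,1)). -/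
open Matrix

noncomputable section

/-!
With `wᵢ = λᵢ²`, `M = (∑ w) • diag w - w wᵀ` is the Laplacian of the complete graph with edge
weights `wᵢ wⱼ`, so its quadratic form is `∑_{i<j} wᵢ wⱼ (hᵢ - hⱼ)²`. This is nonnegative and, as
all weights are positive, vanishes exactly on constant vectors; in particular `M *ᵥ 1 = 0`, so
`det M = 0`.
-/

theorem sum_sum_mul_mul_sub_sq {ι : Type*} [Fintype ι] (w h : ι → ℝ) :
    ∑ i, ∑ j, w i * w j * (h i - h j) ^ 2
      = 2 * ((∑ i, w i) * ∑ i, w i * h i ^ 2 - (∑ i, w i * h i) ^ 2) := by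
  have hterm : ∀ i j, w i * w j * (h i - h j) ^ 2
      = w i * h i ^ 2 * w j + w i * (w j * h j ^ 2) - 2 * (w i * h i) * (w j * h j) := by
    intros; ring
  simp only [hterm, Finset.sum_add_distrib, Finset.sum_sub_distrib, ← Finset.mul_sum,
    ← Finset.sum_mul]
  ring

/-- The Laplacian of the complete graph on `ι` with edge weights `w i * w j`. -/
def productLaplacian {ι : Type*} [Fintype ι] [DecidableEq ι] (w : ι → ℝ) : Matrix ι ι ℝ :=
  (∑ i, w i) • diagonal w - vecMulVec w w

section productLaplacian

variable {ι : Type*} [Fintype ι] [DecidableEq ι]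

theorem productLaplacian_mulVec (w h : ι → ℝ) :
    productLaplacian w *ᵥ h = fun i ↦ (∑ j, w j) * (w i * h i) - (∑ j, w j * h j) * w i := by
  ext i
  simp [productLaplacian, sub_mulVec, smul_mulVec, mulVec_diagonal, vecMulVec_mulVec,
    dotProduct, mul_comm]

theorem productLaplacian_mulVec_dotProduct (w h : ι → ℝ) :
    (productLaplacian w *ᵥ h) ⬝ᵥ h = (∑ i, ∑ j, w i * w j * (h i - h j) ^ 2) / 2 := by
  rw [sum_sum_mul_mul_sub_sq, productLaplacian_mulVec]
  simp only [dotProduct, sub_mul, Finset.sum_sub_distrib, mul_assoc, ← Finset.mul_sum, sq]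
  ring

theorem productLaplacian_isHermitian (w : ι → ℝ) : (productLaplacian w).IsHermitian :=
  ((isHermitian_diagonal w).smul (.all _)).sub <| by
    rw [IsHermitian, conjTranspose_vecMulVec, star_trivial]

theorem posSemidef_productLaplacian {w : ι → ℝ} (hw : ∀ i, 0 ≤ w i) :
    (productLaplacian w).PosSemidef := by
  refine .of_dotProduct_mulVec_nonneg (productLaplacian_isHermitian w) fun h ↦ ?_
  rw [star_trivial, dotProduct_comm, productLaplacian_mulVec_dotProduct]
  exact div_nonneg (Finset.sum_nonneg fun i _ ↦ Finset.sum_nonneg fun j _ ↦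
    mul_nonneg (mul_nonneg (hw i) (hw j)) (sq_nonneg _)) zero_le_two

theorem productLaplacian_mulVec_dotProduct_eq_zero_iff {w : ι → ℝ} (hw : ∀ i, 0 < w i)
    (h : ι → ℝ) : (productLaplacian w *ᵥ h) ⬝ᵥ h = 0 ↔ ∀ i j, h i = h j := by
  have hterm : ∀ i j, 0 ≤ w i * w j * (h i - h j) ^ 2 := fun i j ↦
    mul_nonneg (mul_nonneg (hw i).le (hw j).le) (sq_nonneg _)
  rw [productLaplacian_mulVec_dotProduct, div_eq_zero_iff, or_iff_left two_ne_zero,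
    Finset.sum_eq_zero_iff_of_nonneg fun i _ ↦ Finset.sum_nonneg fun j _ ↦ hterm i j]
  simp only [Finset.mem_univ, true_implies,
    Finset.sum_eq_zero_iff_of_nonneg fun j _ ↦ hterm _ j, mul_eq_zero, (hw _).ne',
    false_or, pow_eq_zero_iff two_ne_zero, sub_eq_zero]

theorem productLaplacian_mulVec_one (w : ι → ℝ) : productLaplacian w *ᵥ 1 = 0 := by
  ext i
  simp [productLaplacian_mulVec, mul_comm]

theorem det_productLaplacian [Nonempty ι] (w : ι → ℝ) : (productLaplacian w).det = 0 :=
  exists_mulVec_eq_zero_iff.mp ⟨1, one_ne_zero, productLaplacian_mulVec_one w⟩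

end productLaplacian

theorem stmt_3 (lam : Fin 3 → ℝ) (hlam : ∀ i, 0 < lam i)
    (M : Matrix (Fin 3) (Fin 3) ℝ)
    (hM : ∀ i j, M i j =
      (lam 0 ^ 2 + lam 1 ^ 2 + lam 2 ^ 2) * lam i ^ 2 * (if i = j then 1 else 0)
        - lam i ^ 2 * lam j ^ 2) :
    M.PosSemidef ∧ M.det = 0 ∧
    ∀ h : Fin 3 → ℝ, (M.mulVec h) ⬝ᵥ h = 0 ↔ (h 0 = h 1 ∧ h 1 = h 2) := by
  have hM' : M = productLaplacian (lam · ^ 2) := by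
    ext i j
    simp [hM, productLaplacian, Fin.sum_univ_three, diagonal_apply, vecMulVec_apply]
  subst hM'
  refine ⟨posSemidef_productLaplacian fun i ↦ sq_nonneg (lam i), det_productLaplacian _,
    fun h ↦ ?_⟩
  rw [productLaplacian_mulVec_dotProduct_eq_zero_iff fun i ↦ pow_pos (hlam i) 2]
  refine ⟨fun hh ↦ ⟨hh 0 1, hh 1 2⟩, fun ⟨h01, h12⟩ i j ↦ ?_⟩
  fin_cases i <;> fin_cases j <;> simp [h01, h12]
end
end

section
/- The function (x₁, x₂, x₃) ↦ √(exp(2(x₁ + x₂)) + exp(2(x₂ + x₃)) + exp(2(x₃ + x₁))) is convex on ℝ³. (In terms of elasticity: the invariant K₂ = ‖cof F‖ is a convex function of the logarithms of the principal stretches, hence of the Hencky strain log V.) -/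
/-!
Writing `u_i(x) = exp (x_i + x_{i+1})` (indices mod 3), the function is the Euclidean norm of the vector
`(u_0(x), u_1(x), u_2(x))`. Each `u_i` is convex and positive (the exponential of a linear form),
and the Euclidean norm is a convex function that is monotone on the positive orthant, so the
composite is convex.
-/

noncomputable section

open Real

lemma convexOn_sqrt_sum_sq {ι E : Type*} [Fintype ι] [AddCommGroup E] [Module ℝ E]
    {s : Set E} (hs : Convex ℝ s) {g : ι → E → ℝ} (hg : ∀ i, ConvexOn ℝ s (g i))
    (hg₀ : ∀ i, ∀ x ∈ s, 0 ≤ g i x) :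
    ConvexOn ℝ s (fun x => √(∑ i, g i x ^ 2)) := by
  let G : E → EuclideanSpace ℝ ι := fun x => WithLp.toLp 2 (g · x)
  have hG : ∀ x, √(∑ i, g i x ^ 2) = ‖G x‖ := fun x => by
    simp [G, EuclideanSpace.norm_eq, Real.norm_eq_abs, sq_abs]
  refine ⟨hs, fun x hx y hy a b ha hb hab => ?_⟩
  simp only [hG, smul_eq_mul]
  calc ‖G (a • x + b • y)‖ ≤ ‖a • G x + b • G y‖ := by
        simp only [EuclideanSpace.norm_eq, Real.norm_eq_abs, sq_abs]
        gcongr with i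
        · exact hg₀ i _ ((hg i).1 hx hy ha hb hab)
        · exact (hg i).2 hx hy ha hb hab
    _ ≤ a * ‖G x‖ + b * ‖G y‖ := by
        refine (norm_add_le _ _).trans_eq ?_
        rw [norm_smul, norm_smul, Real.norm_of_nonneg ha, Real.norm_of_nonneg hb]

theorem stmt_7 :
    ConvexOn ℝ Set.univ (fun x : Fin 3 → ℝ =>
      Real.sqrt (Real.exp (2 * (x 0 + x 1)) + Real.exp (2 * (x 1 + x 2))
        + Real.exp (2 * (x 2 + x 0)))) := by
  have hconv (i : Fin 3) : ConvexOn ℝ Set.univ fun x : Fin 3 → ℝ => exp (x i + x (i + 1)) := by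
    let ℓ : (Fin 3 → ℝ) →ₗ[ℝ] ℝ := .proj i + .proj (i + 1)
    simpa [ℓ, Function.comp_def] using convexOn_exp.comp_linearMap ℓ
  refine (convexOn_sqrt_sum_sq convex_univ hconv fun i x _ => (exp_pos _).le).congr fun x _ => ?_
  simp only [Fin.sum_univ_three, ← exp_nat_mul]
  norm_num [show (1 : Fin 3) + 1 = 2 from rfl, show (2 : Fin 3) + 1 = 0 from rfl]
end
end

section
/- Let β be a real number with 0 < β ≤ 27/4. Then the function (t, δ) ↦ t³ / (β − (log δ)²) is convex on the convex set { (t, δ) ∈ ℝ² : t > 0, δ > 0, (log δ)² < β }. -/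
/-!
Write `t³ / (β - log² δ) = t³ / g(δ)²` with `g(δ) = √(β - log² δ)`. The map `(t, s) ↦ t³ / s²` is
jointly convex for `t ≥ 0, s > 0` (a Radon-type inequality) and nonincreasing in `s`, so composing
it with a positive concave `g` in the second variable keeps it convex. Concavity of `g` comes from
its second derivative, whose sign is that of the cubic `β L - L³ - β` in `L = log δ`; this cubic is
nonpositive on `L² ≤ β` exactly when `β ≤ 27/4`.
-/

open Real Set

lemma add_cube_div_add_sq_le {A C B D : ℝ} (hA : 0 ≤ A) (hC : 0 ≤ C) (hB : 0 < B) (hD : 0 < D) :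
    (A + C) ^ 3 / (B + D) ^ 2 ≤ A ^ 3 / B ^ 2 + C ^ 3 / D ^ 2 := by
  rw [div_add_div _ _ (by positivity) (by positivity),
    div_le_div_iff₀ (by positivity) (by positivity)]
  -- the difference of the two sides is `(AD - CB)² (D (AD + 2CB) + B (2AD + CB))`
  nlinarith [mul_nonneg (sq_nonneg (A * D - C * B))
    (by positivity : (0 : ℝ) ≤ D * (A * D + 2 * C * B) + B * (2 * A * D + C * B))]

lemma convexOn_cube_div_sq :
    ConvexOn ℝ (Ici 0 ×ˢ Ioi 0) fun p : ℝ × ℝ => p.1 ^ 3 / p.2 ^ 2 := by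
  refine convexOn_iff_forall_pos.2 ⟨(convex_Ici 0).prod (convex_Ioi 0), ?_⟩
  rintro ⟨t₁, s₁⟩ ⟨ht₁, hs₁⟩ ⟨t₂, s₂⟩ ⟨ht₂, hs₂⟩ a b ha hb -
  simp only [mem_Ici, mem_Ioi] at ht₁ hs₁ ht₂ hs₂
  have hscale : ∀ {c t s : ℝ}, 0 < c → 0 < s → (c * t) ^ 3 / (c * s) ^ 2 = c * (t ^ 3 / s ^ 2) :=
    fun hc hs => by field_simp
  simpa only [Prod.smul_mk, Prod.mk_add_mk, smul_eq_mul, hscale ha hs₁, hscale hb hs₂] using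
    add_cube_div_add_sq_le (A := a * t₁) (C := b * t₂) (by positivity) (by positivity)
      (mul_pos ha hs₁) (mul_pos hb hs₂)

lemma ConcaveOn.convexOn_cube_div_sq {D : Set ℝ} {g : ℝ → ℝ} (hg : ConcaveOn ℝ D g)
    (hg₀ : ∀ x ∈ D, 0 < g x) :
    ConvexOn ℝ (Ici 0 ×ˢ D) fun p : ℝ × ℝ => p.1 ^ 3 / g p.2 ^ 2 := by
  refine convexOn_iff_forall_pos.2 ⟨(convex_Ici 0).prod hg.1, ?_⟩
  rintro ⟨t₁, δ₁⟩ ⟨ht₁, hδ₁⟩ ⟨t₂, δ₂⟩ ⟨ht₂, hδ₂⟩ a b ha hb hab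
  simp only [mem_Ici] at ht₁ ht₂
  simp only [Prod.smul_mk, Prod.mk_add_mk, smul_eq_mul]
  have hmean : a * g δ₁ + b * g δ₂ ≤ g (a * δ₁ + b * δ₂) :=
    hg.2 hδ₁ hδ₂ ha.le hb.le hab
  have hmean₀ : 0 < a * g δ₁ + b * g δ₂ := by
    have := hg₀ _ hδ₁; have := hg₀ _ hδ₂; positivity
  calc (a * t₁ + b * t₂) ^ 3 / g (a * δ₁ + b * δ₂) ^ 2
      ≤ (a * t₁ + b * t₂) ^ 3 / (a * g δ₁ + b * g δ₂) ^ 2 := by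
        gcongr
    _ ≤ a * (t₁ ^ 3 / g δ₁ ^ 2) + b * (t₂ ^ 3 / g δ₂ ^ 2) := by
        simpa only [Prod.smul_mk, Prod.mk_add_mk, smul_eq_mul] using
          _root_.convexOn_cube_div_sq.2 (x := (t₁, g δ₁)) (y := (t₂, g δ₂))
            ⟨ht₁, hg₀ _ hδ₁⟩ ⟨ht₂, hg₀ _ hδ₂⟩ ha.le hb.le hab

/-- The constant `27/4` is sharp: `4 L³ - 27 L + 27 = (2 L - 3)² (L + 3)` vanishes at `L = 3/2`. -/
lemma mul_sub_pow_three_le {β L : ℝ} (hβ : β ≤ 27 / 4) (hL : L ^ 2 ≤ β) :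
    β * L - L ^ 3 ≤ β := by
  rcases le_or_gt L 0 with h | h
  · nlinarith [mul_nonneg (neg_nonneg.2 h) (sub_nonneg.2 hL)]
  rcases le_or_gt L 1 with h1 | h1
  · nlinarith
  · nlinarith [mul_nonneg (sq_nonneg (2 * L - 3)) (by linarith : (0 : ℝ) ≤ L + 3),
      mul_nonneg (sub_nonneg.2 hβ) (by linarith : (0 : ℝ) ≤ L - 1)]

lemma setOf_log_sq_lt_eq_Ioo (β : ℝ) :
    {δ : ℝ | 0 < δ ∧ log δ ^ 2 < β} = Ioo (exp (-√β)) (exp √β) := by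
  ext δ
  simp only [mem_ofPred_eq, mem_Ioo, sq_lt]
  constructor
  · rintro ⟨hδ, hlo, hhi⟩
    exact ⟨(lt_log_iff_exp_lt hδ).1 hlo, (log_lt_iff_lt_exp hδ).1 hhi⟩
  · rintro ⟨hlo, hhi⟩
    have hδ : 0 < δ := (exp_pos _).trans hlo
    exact ⟨hδ, (lt_log_iff_exp_lt hδ).2 hlo, (log_lt_iff_lt_exp hδ).2 hhi⟩

section SqrtSubLogSq

variable {β x : ℝ}

lemma hasDerivAt_sqrt_sub_log_sq (hx : 0 < x) (hxβ : log x ^ 2 < β) :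
    HasDerivAt (fun δ => √(β - log δ ^ 2)) (-log x / (x * √(β - log x ^ 2))) x := by
  have hR : 0 < β - log x ^ 2 := sub_pos.2 hxβ
  refine ((((hasDerivAt_log hx.ne').fun_pow 2).const_sub β).sqrt hR.ne').congr_deriv ?_
  field_simp
  ring

lemma hasDerivAt_deriv_sqrt_sub_log_sq (hx : 0 < x) (hxβ : log x ^ 2 < β) :
    HasDerivAt (fun δ => -log δ / (δ * √(β - log δ ^ 2)))
      ((β * log x - log x ^ 3 - β) / (x ^ 2 * (β - log x ^ 2) * √(β - log x ^ 2))) x := by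
  have hR : 0 < β - log x ^ 2 := sub_pos.2 hxβ
  have hs : 0 < √(β - log x ^ 2) := sqrt_pos.2 hR
  have hs2 : √(β - log x ^ 2) ^ 2 = β - log x ^ 2 := sq_sqrt hR.le
  refine ((hasDerivAt_log hx.ne').fun_neg.fun_div ((hasDerivAt_id' x).fun_mul
    (hasDerivAt_sqrt_sub_log_sq hx hxβ)) (mul_pos hx hs).ne').congr_deriv ?_
  field_simp
  rw [hs2]
  ring

lemma concaveOn_sqrt_sub_log_sq (hβ : β ≤ 27 / 4) :
    ConcaveOn ℝ {δ : ℝ | 0 < δ ∧ log δ ^ 2 < β} fun δ => √(β - log δ ^ 2) := by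
  have hmem : ∀ δ ∈ Ioo (exp (-√β)) (exp √β), 0 < δ ∧ log δ ^ 2 < β := fun δ hδ => by
    rwa [← setOf_log_sq_lt_eq_Ioo] at hδ
  rw [setOf_log_sq_lt_eq_Ioo]
  refine concaveOn_of_hasDerivWithinAt2_nonpos (convex_Ioo _ _)
    (f' := fun δ => -log δ / (δ * √(β - log δ ^ 2)))
    (f'' := fun δ => (β * log δ - log δ ^ 3 - β) / (δ ^ 2 * (β - log δ ^ 2) * √(β - log δ ^ 2)))
    ?_ ?_ ?_ ?_ <;> try rw [interior_Ioo]
  · exact fun δ hδ => (hasDerivAt_sqrt_sub_log_sq (hmem δ hδ).1 (hmem δ hδ).2).continuousAt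
      |>.continuousWithinAt
  · exact fun δ hδ => (hasDerivAt_sqrt_sub_log_sq (hmem δ hδ).1 (hmem δ hδ).2).hasDerivWithinAt
  · exact fun δ hδ =>
      (hasDerivAt_deriv_sqrt_sub_log_sq (hmem δ hδ).1 (hmem δ hδ).2).hasDerivWithinAt
  · intro δ hδ
    obtain ⟨hδ₀, hδβ⟩ := hmem δ hδ
    have hR : 0 < β - log δ ^ 2 := sub_pos.2 hδβ
    exact div_nonpos_of_nonpos_of_nonneg
      (sub_nonpos.2 (mul_sub_pow_three_le hβ hδβ.le)) (by positivity)

end SqrtSubLogSq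

theorem stmt_11_general (β : ℝ) (hβ : β ≤ 27 / 4) :
    ConvexOn ℝ {p : ℝ × ℝ | 0 < p.1 ∧ 0 < p.2 ∧ (Real.log p.2) ^ 2 < β}
      (fun p : ℝ × ℝ => p.1 ^ 3 / (β - (Real.log p.2) ^ 2)) := by
  have hdom : {p : ℝ × ℝ | 0 < p.1 ∧ 0 < p.2 ∧ log p.2 ^ 2 < β} =
      Ioi 0 ×ˢ {δ : ℝ | 0 < δ ∧ log δ ^ 2 < β} := rfl
  have hconvex := (concaveOn_sqrt_sub_log_sq hβ).convexOn_cube_div_sq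
    fun δ hδ => sqrt_pos.2 (sub_pos.2 hδ.2)
  rw [hdom]
  refine (hconvex.subset (prod_mono Ioi_subset_Ici_self subset_rfl) ?_).congr ?_
  · rw [setOf_log_sq_lt_eq_Ioo]
    exact (convex_Ioi 0).prod (convex_Ioo _ _)
  · rintro p ⟨-, -, hp⟩
    simp only [sq_sqrt (sub_pos.2 hp).le]

theorem stmt_11 (β : ℝ) (hβ0 : 0 < β) (hβ : β ≤ 27 / 4) :
    ConvexOn ℝ {p : ℝ × ℝ | 0 < p.1 ∧ 0 < p.2 ∧ (Real.log p.2) ^ 2 < β}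
      (fun p : ℝ × ℝ => p.1 ^ 3 / (β - (Real.log p.2) ^ 2)) :=
  stmt_11_general β hβ
end

section
/- Let k ∈ ℝ and let u : (0, ∞) → ℝ be a twice continuously differentiable function with u(x) > 0 for all x > 0 that satisfies x²·u(x)·u''(x) − ( x·u'(x) − u(x)/2 )² = (k/4)·u(x)² for all x > 0. Then there exist real constants c₁ and c₂ > 0 such that u(x) = c₂ · x^{c₁} · exp( ((k + 1)/8) · (log x)² ) for all x > 0. -/
/-!
Put `w x = x u'(x) / u(x)`. Expanding the square, the equation says exactly
`x w'(x) = (k + 1) / 4`, so `w = (k + 1) / 4 · log x + c₁` on `(0, ∞)`. Then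
`(log u)' = w / x` integrates to `log u = (k + 1) / 8 · (log x)² + c₁ log x + b`,
and `c₂ = exp b`.
-/

open Real Set

theorem IsOpen.exists_eq_add_of_hasDerivAt {𝕜 G : Type*} [RCLike 𝕜] [NormedAddCommGroup G]
    [NormedSpace 𝕜 G] {s : Set 𝕜} {f g f' : 𝕜 → G} (hs : IsOpen s) (hs' : IsPreconnected s)
    (hf : ∀ x ∈ s, HasDerivAt f (f' x) x) (hg : ∀ x ∈ s, HasDerivAt g (f' x) x) :
    ∃ a, ∀ x ∈ s, f x = g x + a :=
  hs.exists_eq_add_of_deriv_eq hs'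
    (fun x hx => (hf x hx).differentiableAt.differentiableWithinAt)
    (fun x hx => (hg x hx).differentiableAt.differentiableWithinAt)
    (fun x hx => (hf x hx).deriv.trans (hg x hx).deriv.symm)

section
variable {u : ℝ → ℝ} {k x : ℝ}

theorem hasDerivAt_mul_deriv_div_of_ode (hx : x ≠ 0) (hu : DifferentiableAt ℝ u x)
    (hu' : DifferentiableAt ℝ (deriv u) x) (hux : u x ≠ 0)
    (hode : x ^ 2 * u x * deriv (deriv u) x - (x * deriv u x - u x / 2) ^ 2
        = (k / 4) * (u x) ^ 2) :
    HasDerivAt (fun y => y * deriv u y / u y) ((k + 1) / 4 / x) x := by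
  refine (((hasDerivAt_id' x).mul hu'.hasDerivAt).div hu.hasDerivAt hux).congr_deriv ?_
  simp only [Pi.mul_apply]
  field_simp
  linear_combination 4 * hode

theorem exists_log_eq_of_mul_deriv_div_eq {a c : ℝ} (hu : ∀ x > 0, DifferentiableAt ℝ u x)
    (hu0 : ∀ x > 0, u x ≠ 0) (h : ∀ x > 0, x * deriv u x / u x = a * log x + c) :
    ∃ b, ∀ x > 0, log (u x) = a / 2 * log x ^ 2 + c * log x + b := by
  refine isOpen_Ioi.exists_eq_add_of_hasDerivAt isPreconnected_Ioi
    (f' := fun x => deriv u x / u x) (fun x hx => (hu x hx).hasDerivAt.log (hu0 x hx))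
    (fun x (hx : 0 < x) => ?_)
  have hlog := hasDerivAt_log hx.ne'
  refine (((hlog.pow 2).const_mul (a / 2)).add (hlog.const_mul c)).congr_deriv ?_
  have hw := h x hx
  rw [div_eq_iff (hu0 x hx)] at hw
  rw [eq_div_iff (hu0 x hx)]
  simp only [Nat.cast_ofNat, Nat.add_one_sub_one, pow_one]
  field_simp
  linear_combination -hw

end

theorem stmt_13 (k : ℝ) (u : ℝ → ℝ)
    (hreg : ContDiffOn ℝ 2 u (Set.Ioi 0))
    (hpos : ∀ x : ℝ, 0 < x → 0 < u x)
    (hode : ∀ x : ℝ, 0 < x →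
      x ^ 2 * u x * deriv (deriv u) x - (x * deriv u x - u x / 2) ^ 2
        = (k / 4) * (u x) ^ 2) :
    ∃ c₁ c₂ : ℝ, 0 < c₂ ∧
      ∀ x : ℝ, 0 < x →
        u x = c₂ * x ^ c₁ * Real.exp ((k + 1) / 8 * (Real.log x) ^ 2) := by
  have hu : ∀ x > 0, DifferentiableAt ℝ u x := fun x hx =>
    (hreg.differentiableOn two_ne_zero).differentiableAt (Ioi_mem_nhds hx)
  have hu' : ∀ x > 0, DifferentiableAt ℝ (deriv u) x := fun x hx =>
    ((hreg.deriv_of_isOpen isOpen_Ioi le_rfl).differentiableOn one_ne_zero).differentiableAt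
      (Ioi_mem_nhds hx)
  obtain ⟨c₁, hc₁⟩ := isOpen_Ioi.exists_eq_add_of_hasDerivAt isPreconnected_Ioi
    (fun x (hx : 0 < x) => hasDerivAt_mul_deriv_div_of_ode hx.ne' (hu x hx) (hu' x hx)
      (hpos x hx).ne' (hode x hx))
    (fun x (hx : 0 < x) => (hasDerivAt_log hx.ne').const_mul ((k + 1) / 4))
  obtain ⟨b, hb⟩ := exists_log_eq_of_mul_deriv_div_eq hu (fun x hx => (hpos x hx).ne') hc₁
  refine ⟨c₁, exp b, exp_pos b, fun x hx => ?_⟩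
  rw [← exp_log (hpos x hx), hb x hx, rpow_def_of_pos hx, ← exp_add, ← exp_add]
  ring_nf
end

section
/- Let α ∈ [0, 1) and λ₁ > 0 be real numbers. Then the equation λ₂^{4(1+α)} − (2/3)·λ₁^{−2α}·λ₂² − (1/3)·λ₁^{2(1−α)} = 0 has exactly one solution λ₂ > 0; moreover at this solution the partial derivative with respect to λ₂, namely 4(1+α)λ₂^{3+4α} − (4/3)λ₁^{−2α}λ₂, is strictly positive. -/
noncomputable section

open Real Set


private lemma aux_deriv (α A B x : ℝ) (hα0 : 0 ≤ α) (hA : 0 < A) (hB : 0 < B)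
    (hx : 0 < x) (hxeq : x ^ (4 * (1 + α)) - 2 / 3 * A * x ^ 2 - B = 0) :
    0 < 4 * (1 + α) * x ^ (3 + 4 * α) - 4 / 3 * A * x := by
  have heq : x ^ (4 * (1 + α)) = 2 / 3 * A * x ^ 2 + B := by linarith
  have h1 : x ^ (4 * (1 + α)) = x * x ^ ((3:ℝ) + 4 * α) := by
    rw [show (4 * (1 + α)) = (1:ℝ) + ((3:ℝ) + 4 * α) by ring, Real.rpow_add hx,
      Real.rpow_one]
  have ht : x * x ^ ((3:ℝ) + 4 * α) = 2 / 3 * A * x ^ 2 + B := by rw [← h1]; exact heq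
  have hx2 : 0 < A * x ^ 2 := by positivity
  have hx3 : 0 ≤ α * (A * x ^ 2) := by positivity
  have hαB : 0 ≤ α * B := by positivity
  have hfinal : 0 < x * (4 * (1 + α) * x ^ ((3:ℝ) + 4 * α) - 4 / 3 * A * x) := by
    have e : x * (4 * (1 + α) * x ^ ((3:ℝ) + 4 * α) - 4 / 3 * A * x)
        = 4 * (1 + α) * (x * x ^ ((3:ℝ) + 4 * α)) - 4 / 3 * A * x ^ 2 := by ring
    rw [e, ht]
    nlinarith [hx2, hx3, hαB, hB]
  exact (mul_pos_iff_of_pos_left hx).mp hfinal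

theorem stmt_16 (α lam₁ : ℝ) (hα0 : 0 ≤ α) (hα1 : α < 1) (hlam : 0 < lam₁) :
    (∃! l : ℝ, 0 < l ∧
      l ^ (4 * (1 + α)) - (2 / 3) * lam₁ ^ (-(2 * α)) * l ^ 2
        - (1 / 3) * lam₁ ^ (2 * (1 - α)) = 0) ∧
    ∀ l : ℝ, 0 < l →
      l ^ (4 * (1 + α)) - (2 / 3) * lam₁ ^ (-(2 * α)) * l ^ 2
        - (1 / 3) * lam₁ ^ (2 * (1 - α)) = 0 →
      0 < 4 * (1 + α) * l ^ (3 + 4 * α) - (4 / 3) * lam₁ ^ (-(2 * α)) * l := by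
  set A := lam₁ ^ (-(2 * α)) with hAdef
  set B := 1 / 3 * lam₁ ^ (2 * (1 - α)) with hBdef
  have hA : 0 < A := Real.rpow_pos_of_pos hlam _
  have hB : 0 < B := by
    have := Real.rpow_pos_of_pos hlam (2 * (1 - α))
    rw [hBdef]; positivity
  have hexp : (0:ℝ) < 2 + 4 * α := by linarith
  clear_value A B
  set g : ℝ → ℝ := fun l => l ^ ((2:ℝ) + 4 * α) - B / l ^ 2 with hg
  -- equation equivalence
  have key : ∀ l : ℝ, 0 < l →
      (l ^ (4 * (1 + α)) - 2 / 3 * A * l ^ 2 - B = 0 ↔ g l = 2 / 3 * A) := by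
    intro l hl
    have hl2 : (l:ℝ) ^ 2 ≠ 0 := pow_ne_zero 2 hl.ne'
    have h1 : l ^ (4 * (1 + α)) = l ^ 2 * l ^ ((2:ℝ) + 4 * α) := by
      rw [show (4 * (1 + α)) = (2:ℝ) + ((2:ℝ) + 4 * α) by ring, Real.rpow_add hl,
        Real.rpow_two]
    have h2 : l ^ (4 * (1 + α)) - 2 / 3 * A * l ^ 2 - B = l ^ 2 * (g l - 2 / 3 * A) := by
      rw [h1]; simp only [hg]; field_simp; ring
    rw [h2, mul_eq_zero, sub_eq_zero]
    constructor
    · rintro (h | h)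
      · exact absurd h hl2
      · exact h
    · intro h; exact Or.inr h
  have gmono : StrictMonoOn g (Ioi (0:ℝ)) := by
    intro x hx y hy hxy
    simp only [mem_Ioi] at hx hy
    have h1 : x ^ ((2:ℝ) + 4 * α) < y ^ ((2:ℝ) + 4 * α) :=
      Real.rpow_lt_rpow hx.le hxy hexp
    have h2 : B / y ^ 2 < B / x ^ 2 :=
      div_lt_div_of_pos_left hB (by positivity) (by nlinarith)
    simp only [hg]
    linarith
  -- endpoints
  set a := min 1 B with hadef
  set b := 1 + 2 / 3 * A + B with hbdef
  have ha : 0 < a := lt_min one_pos hB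
  have ha1 : a ≤ 1 := min_le_left _ _
  have hb1 : (1:ℝ) ≤ b := by rw [hbdef]; nlinarith
  have hab : a ≤ b := ha1.trans hb1
  have haB : a ≤ B := min_le_right _ _
  have hbge : 2 / 3 * A + B ≤ b := by rw [hbdef]; linarith
  clear_value a b
  have gcont : ContinuousOn g (Icc a b) := by
    apply ContinuousOn.sub
    · exact ContinuousOn.rpow_const continuousOn_id (fun x hx => Or.inr hexp.le)
    · apply ContinuousOn.div continuousOn_const (by fun_prop)
      intro x hx
      have : 0 < x := lt_of_lt_of_le ha hx.1
      positivity
  have hga : g a ≤ 2 / 3 * A := by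
    have h1 : a ^ ((2:ℝ) + 4 * α) * a ^ 2 ≤ B := by
      have e : a ^ ((2:ℝ) + 4 * α) * a ^ 2 = a ^ ((4:ℝ) + 4 * α) := by
        rw [← Real.rpow_two, ← Real.rpow_add ha]; ring_nf
      rw [e]
      calc a ^ ((4:ℝ) + 4 * α) ≤ a ^ (1:ℝ) :=
            Real.rpow_le_rpow_of_exponent_ge ha ha1 (by linarith)
        _ = a := Real.rpow_one a
        _ ≤ B := haB
    have h2 : a ^ ((2:ℝ) + 4 * α) ≤ B / a ^ 2 := by
      rw [le_div_iff₀ (by positivity)]; exact h1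
    have : g a ≤ 0 := by simp only [hg]; linarith
    nlinarith
  have hgb : 2 / 3 * A ≤ g b := by
    have hb0 : (0:ℝ) < b := lt_of_lt_of_le one_pos hb1
    have h1 : b ^ 2 ≤ b ^ ((2:ℝ) + 4 * α) := by
      have := Real.rpow_le_rpow_of_exponent_le hb1 (show (2:ℝ) ≤ 2 + 4 * α by linarith)
      rwa [Real.rpow_two] at this
    have h2 : B / b ^ 2 ≤ B := div_le_self hB.le (by nlinarith)
    have h3 : 2 / 3 * A + B ≤ b ^ 2 := by nlinarith [hbge, hb1]
    simp only [hg]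
    nlinarith [h1, h2, h3]
  obtain ⟨l, hlmem, hgl⟩ := intermediate_value_Icc hab gcont ⟨hga, hgb⟩
  have hlpos : 0 < l := lt_of_lt_of_le ha hlmem.1
  constructor
  · refine ⟨l, ⟨hlpos, (key l hlpos).mpr hgl⟩, ?_⟩
    rintro y ⟨hy, hy2⟩
    exact gmono.injOn (mem_Ioi.mpr hy) (mem_Ioi.mpr hlpos)
      (((key y hy).mp hy2).trans hgl.symm)
  · intro x hx hxeq
    exact aux_deriv α A B x hα0 hA hB hx hxeq
end
end

section
/- Let α ∈ (0, 1) and define σ₁₂ : ℝ → ℝ by σ₁₂(γ) = α·(3 + γ²)^{α/2 − 1}·γ. Then σ₁₂(0) = 0, σ₁₂'(0) = α·3^{α/2 − 1} > 0, σ₁₂(γ) → 0 as γ → +∞, and σ₁₂ is not monotone on ℝ: there exist 0 < γ₁ < γ₂ with σ₁₂(γ₁) > σ₁₂(γ₂). -/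
open Filter

/-! Since `(3 + γ²)^(α/2 - 1) ≤ γ^(α - 2)` for `γ > 0`, the stress is squeezed between `0` and
`α γ^(α - 1)`, which tends to `0` because `α < 1`. As the stress is positive at `γ = 1`, it must
later drop below that value. -/

section SimpleShear

variable {a c p : ℝ}

theorem hasDerivAt_mul_add_sq_rpow_mul_zero (hc : 0 < c) :
    HasDerivAt (fun γ : ℝ => a * (c + γ ^ 2) ^ p * γ) (a * c ^ p) 0 := by
  have hbase : HasDerivAt (fun γ : ℝ => c + γ ^ 2) 0 0 := by
    simpa using (hasDerivAt_pow 2 (0 : ℝ)).const_add c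
  have h := ((hbase.rpow_const (p := p) (Or.inl (by simpa using hc.ne'))).const_mul a).mul
    (hasDerivAt_id' (0 : ℝ))
  exact h.congr_deriv (by simp)

theorem add_sq_rpow_mul_le_rpow (hc : 0 ≤ c) (hp : p ≤ 0) {γ : ℝ} (hγ : 0 < γ) :
    (c + γ ^ 2) ^ p * γ ≤ γ ^ (2 * p + 1) := by
  have hsq : (γ ^ 2) ^ p = γ ^ (2 * p) := by
    rw [← Real.rpow_natCast, ← Real.rpow_mul hγ.le, Nat.cast_ofNat]
  calc (c + γ ^ 2) ^ p * γ ≤ (γ ^ 2) ^ p * γ := by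
        refine mul_le_mul_of_nonneg_right ?_ hγ.le
        exact Real.rpow_le_rpow_of_nonpos (by positivity) (by linarith) hp
    _ = γ ^ (2 * p + 1) := by rw [hsq, Real.rpow_add_one hγ.ne']

theorem tendsto_mul_add_sq_rpow_mul_atTop (ha : 0 ≤ a) (hc : 0 ≤ c) (hp : p < -1 / 2) :
    Tendsto (fun γ : ℝ => a * (c + γ ^ 2) ^ p * γ) atTop (nhds 0) := by
  have hmajorant : Tendsto (fun γ : ℝ => a * γ ^ (2 * p + 1)) atTop (nhds 0) := by
    simpa using (tendsto_rpow_neg_atTop (y := -(2 * p + 1)) (by linarith)).const_mul a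
  refine squeeze_zero' ?_ ?_ hmajorant
  · filter_upwards [eventually_ge_atTop 0] with γ hγ
    positivity
  · filter_upwards [eventually_gt_atTop 0] with γ hγ
    rw [mul_assoc]
    exact mul_le_mul_of_nonneg_left (add_sq_rpow_mul_le_rpow hc (by linarith) hγ) ha

end SimpleShear

theorem exists_gt_lt_of_tendsto_atTop_zero {f : ℝ → ℝ} (hf : Tendsto f atTop (nhds 0))
    {x : ℝ} (hx : 0 < f x) : ∃ y, x < y ∧ f y < f x :=
  ((eventually_gt_atTop x).and (hf.eventually_lt_const hx)).exists

theorem stmt_17 (α : ℝ) (hα0 : 0 < α) (hα1 : α < 1) :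
    (fun γ : ℝ => α * (3 + γ ^ 2) ^ (α / 2 - 1) * γ) 0 = 0 ∧
    deriv (fun γ : ℝ => α * (3 + γ ^ 2) ^ (α / 2 - 1) * γ) 0 = α * (3 : ℝ) ^ (α / 2 - 1) ∧
    0 < α * (3 : ℝ) ^ (α / 2 - 1) ∧
    Tendsto (fun γ : ℝ => α * (3 + γ ^ 2) ^ (α / 2 - 1) * γ) atTop (nhds 0) ∧
    ¬ Monotone (fun γ : ℝ => α * (3 + γ ^ 2) ^ (α / 2 - 1) * γ) ∧
    ∃ γ₁ γ₂ : ℝ, 0 < γ₁ ∧ γ₁ < γ₂ ∧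
      α * (3 + γ₂ ^ 2) ^ (α / 2 - 1) * γ₂ < α * (3 + γ₁ ^ 2) ^ (α / 2 - 1) * γ₁ := by
  have htend := tendsto_mul_add_sq_rpow_mul_atTop (c := 3) (p := α / 2 - 1) hα0.le (by norm_num)
    (by linarith)
  obtain ⟨γ₂, hγ₂, hlt⟩ := exists_gt_lt_of_tendsto_atTop_zero htend
    (by positivity : 0 < α * (3 + (1 : ℝ) ^ 2) ^ (α / 2 - 1) * 1)
  refine ⟨by simp, (hasDerivAt_mul_add_sq_rpow_mul_zero (by norm_num)).deriv,
    by positivity, htend, fun hmono => (hmono hγ₂.le).not_gt hlt, 1, γ₂, one_pos, hγ₂, hlt⟩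
end

section
/- Let α ∈ [0, 1) and for each λ₁ > 0 let λ₂(λ₁) > 0 be the unique positive solution of λ₂^{4(1+α)} − (2/3)λ₁^{−2α}λ₂² − (1/3)λ₁^{2(1−α)} = 0. Define K₁(λ₁) = √(λ₁² + 2·λ₂(λ₁)²), K₃(λ₁) = λ₁·λ₂(λ₁)², and σ₁₁(λ₁) = √3·λ₁²/(K₁(λ₁)·K₃(λ₁)) − K₃(λ₁)^{−(α+1)}. Then σ₁₁(1) = 0 (indeed λ₂(1) = 1), σ₁₁(λ₁) → 0 as λ₁ → ∞, σ₁₁(λ₁) > 0 for some λ₁ > 1, and σ₁₁ is not monotone on (0, ∞): there exist 1 < a < b with σ₁₁(a) > σ₁₁(b). -/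
open Filter

noncomputable section

theorem stmt_19 (α : ℝ) (hα0 : 0 ≤ α) (hα1 : α < 1) (lam₂ : ℝ → ℝ)
    (hpos : ∀ l₁ : ℝ, 0 < l₁ → 0 < lam₂ l₁)
    (heq : ∀ l₁ : ℝ, 0 < l₁ →
      (lam₂ l₁) ^ (4 * (1 + α)) - (2 / 3) * l₁ ^ (-(2 * α)) * (lam₂ l₁) ^ 2
        - (1 / 3) * l₁ ^ (2 * (1 - α)) = 0) :
    let K₁ : ℝ → ℝ := fun l₁ => Real.sqrt (l₁ ^ 2 + 2 * (lam₂ l₁) ^ 2)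
    let K₃ : ℝ → ℝ := fun l₁ => l₁ * (lam₂ l₁) ^ 2
    let σ : ℝ → ℝ := fun l₁ =>
      Real.sqrt 3 * l₁ ^ 2 / (K₁ l₁ * K₃ l₁) - (K₃ l₁) ^ (-(α + 1))
    lam₂ 1 = 1 ∧
    σ 1 = 0 ∧
    Tendsto σ atTop (nhds 0) ∧
    (∃ l₁ : ℝ, 1 < l₁ ∧ 0 < σ l₁) ∧
    ∃ a b : ℝ, 1 < a ∧ a < b ∧ σ b < σ a := by
  intro K₁ K₃ σ
  have hE : ∀ l₁ : ℝ, 0 < l₁ →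
      (lam₂ l₁) ^ (4 * (1 + α)) =
        (2 / 3) * l₁ ^ (-(2 * α)) * (lam₂ l₁) ^ 2 + (1 / 3) * l₁ ^ (2 * (1 - α)) := by
    intro l₁ h
    have := heq l₁ h
    linarith
  -- lam₂ 1 = 1
  have h21 : lam₂ 1 = 1 := by
    have ht : 0 < lam₂ 1 := hpos 1 one_pos
    set t := lam₂ 1 with htdef
    have hE1 : t ^ (4 * (1 + α)) = (2 / 3) * t ^ 2 + 1 / 3 := by
      have := hE 1 one_pos
      simpa [Real.one_rpow] using this
    have h2le : (2 : ℝ) ≤ 4 * (1 + α) := by nlinarith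
    rcases lt_trichotomy t 1 with h | h | h
    · exfalso
      have h1 : t ^ (4 * (1 + α)) ≤ t ^ (2 : ℝ) :=
        Real.rpow_le_rpow_of_exponent_ge ht h.le h2le
      rw [show (2 : ℝ) = ((2 : ℕ) : ℝ) by norm_num, Real.rpow_natCast] at h1
      nlinarith
    · exact h
    · exfalso
      have h1 : t ^ (2 : ℝ) ≤ t ^ (4 * (1 + α)) :=
        Real.rpow_le_rpow_of_exponent_le h.le h2le
      rw [show (2 : ℝ) = ((2 : ℕ) : ℝ) by norm_num, Real.rpow_natCast] at h1
      nlinarith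
  -- key identity
  have hKid : ∀ l₁ : ℝ, 0 < l₁ →
      l₁ ^ 2 + 2 * (lam₂ l₁) ^ 2 =
        3 * (l₁ * (lam₂ l₁) ^ 2) ^ (2 * α) * (lam₂ l₁) ^ 4 := by
    intro l₁ hl
    have ht : 0 < lam₂ l₁ := hpos l₁ hl
    set t := lam₂ l₁ with htdef
    have e1 : (l₁ * t ^ 2) ^ (2 * α) = l₁ ^ (2 * α) * t ^ (4 * α) := by
      rw [Real.mul_rpow hl.le (sq_nonneg t), ← Real.rpow_natCast t 2,
        ← Real.rpow_mul ht.le, show ((2 : ℕ) : ℝ) * (2 * α) = 4 * α by push_cast; ring]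
    have e2 : t ^ (4 * α) * t ^ (4 : ℕ) = t ^ (4 * (1 + α)) := by
      rw [← Real.rpow_natCast t 4, ← Real.rpow_add ht,
        show 4 * α + ((4 : ℕ) : ℝ) = 4 * (1 + α) by push_cast; ring]
    have e3 : l₁ ^ (2 * α) * l₁ ^ (-(2 * α)) = 1 := by
      rw [← Real.rpow_add hl]
      simp
    have e4 : l₁ ^ (2 * α) * l₁ ^ (2 * (1 - α)) = l₁ ^ (2 : ℕ) := by
      rw [← Real.rpow_add hl, show 2 * α + 2 * (1 - α) = ((2 : ℕ) : ℝ) by push_cast; ring,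
        Real.rpow_natCast]
    calc l₁ ^ 2 + 2 * t ^ 2
        = 2 * (l₁ ^ (2 * α) * l₁ ^ (-(2 * α))) * t ^ 2
            + (l₁ ^ (2 * α) * l₁ ^ (2 * (1 - α))) := by rw [e3, e4]; ring
      _ = 3 * l₁ ^ (2 * α) *
            ((2 / 3) * l₁ ^ (-(2 * α)) * t ^ 2 + (1 / 3) * l₁ ^ (2 * (1 - α))) := by ring
      _ = 3 * l₁ ^ (2 * α) * (t ^ (4 * α) * t ^ (4 : ℕ)) := by rw [e2, hE l₁ hl]
      _ = 3 * (l₁ ^ (2 * α) * t ^ (4 * α)) * t ^ 4 := by ring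
      _ = 3 * (l₁ * t ^ 2) ^ (2 * α) * t ^ 4 := by rw [e1]
  -- K₁ formula
  have hK1 : ∀ l₁ : ℝ, 0 < l₁ →
      K₁ l₁ = Real.sqrt 3 * (K₃ l₁) ^ α * (lam₂ l₁) ^ 2 := by
    intro l₁ hl
    have ht : 0 < lam₂ l₁ := hpos l₁ hl
    have hK3 : 0 < K₃ l₁ := by
      simp only [K₃]
      positivity
    have hαp : 0 < (K₃ l₁) ^ α := Real.rpow_pos_of_pos hK3 α
    have esq : ((K₃ l₁) ^ α) ^ 2 = (K₃ l₁) ^ (2 * α) := by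
      rw [← Real.rpow_natCast ((K₃ l₁) ^ α) 2, ← Real.rpow_mul hK3.le,
        show α * ((2 : ℕ) : ℝ) = 2 * α by push_cast; ring]
    have key : l₁ ^ 2 + 2 * (lam₂ l₁) ^ 2 =
        (Real.sqrt 3 * (K₃ l₁) ^ α * (lam₂ l₁) ^ 2) ^ 2 := by
      rw [mul_pow, mul_pow, Real.sq_sqrt (by norm_num : (0:ℝ) ≤ 3), esq]
      rw [hKid l₁ hl]
      simp only [K₃]
      ring
    simp only [K₁]
    rw [key]
    exact Real.sqrt_sq (by positivity)
  -- σ formula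
  have hσ : ∀ l₁ : ℝ, 0 < l₁ →
      σ l₁ = (K₃ l₁) ^ (-α) * ((l₁ ^ 2 - (lam₂ l₁) ^ 2) / (l₁ * (lam₂ l₁) ^ 4)) := by
    intro l₁ hl
    have ht : 0 < lam₂ l₁ := hpos l₁ hl
    have hK3 : 0 < K₃ l₁ := by simp only [K₃]; positivity
    have hαp : 0 < (K₃ l₁) ^ α := Real.rpow_pos_of_pos hK3 α
    have hs3 : (0 : ℝ) < Real.sqrt 3 := by positivity
    have e1 : (K₃ l₁) ^ (-(α + 1)) = ((K₃ l₁) ^ α * K₃ l₁)⁻¹ := by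
      rw [Real.rpow_neg hK3.le, Real.rpow_add hK3, Real.rpow_one]
    have e2 : (K₃ l₁) ^ (-α) = ((K₃ l₁) ^ α)⁻¹ := Real.rpow_neg hK3.le α
    simp only [σ]
    rw [hK1 l₁ hl, e1, e2]
    have hK3d : K₃ l₁ = l₁ * (lam₂ l₁) ^ 2 := rfl
    rw [hK3d]
    have hne : lam₂ l₁ ≠ 0 := ne_of_gt ht
    have hlne : l₁ ≠ 0 := ne_of_gt hl
    have hKαne : (l₁ * (lam₂ l₁) ^ 2) ^ α ≠ 0 := by
      rw [← hK3d]; exact ne_of_gt hαp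
    field_simp
  -- lam₂ l₁ < l₁ for l₁ > 1
  have hlt : ∀ l₁ : ℝ, 1 < l₁ → lam₂ l₁ < l₁ := by
    intro l₁ hl1
    have hl : 0 < l₁ := lt_trans one_pos hl1
    have ht : 0 < lam₂ l₁ := hpos l₁ hl
    by_contra hc
    push_neg at hc
    set t := lam₂ l₁ with htdef
    have ht1 : 1 < t := lt_of_lt_of_le hl1 hc
    have b1 : l₁ ^ (-(2 * α)) ≤ 1 :=
      Real.rpow_le_one_of_one_le_of_nonpos hl1.le (by nlinarith)
    have b2 : l₁ ^ (2 * (1 - α)) ≤ l₁ ^ ((2 : ℕ) : ℝ) :=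
      Real.rpow_le_rpow_of_exponent_le hl1.le (by push_cast; nlinarith)
    rw [Real.rpow_natCast] at b2
    have b3 : l₁ ^ (2 : ℕ) ≤ t ^ (2 : ℕ) := by nlinarith
    have b4 : t ^ ((4 : ℕ) : ℝ) ≤ t ^ (4 * (1 + α)) :=
      Real.rpow_le_rpow_of_exponent_le ht1.le (by push_cast; nlinarith)
    rw [Real.rpow_natCast] at b4
    have hE' := hE l₁ hl
    have hb : t ^ (4 : ℕ) ≤ t ^ 2 := by nlinarith [sq_nonneg t]
    have h12 : (1:ℝ) < t ^ 2 := by nlinarith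
    have hx := mul_pos (show (0:ℝ) < t ^ 2 by positivity)
      (show (0:ℝ) < t ^ 2 - 1 by linarith)
    nlinarith [hb, hx]
  -- positivity of σ on (1, ∞)
  have hσpos : ∀ l₁ : ℝ, 1 < l₁ → 0 < σ l₁ := by
    intro l₁ hl1
    have hl : 0 < l₁ := lt_trans one_pos hl1
    have ht : 0 < lam₂ l₁ := hpos l₁ hl
    have hK3 : 0 < K₃ l₁ := by simp only [K₃]; positivity
    rw [hσ l₁ hl]
    have h1 : 0 < (K₃ l₁) ^ (-α) := Real.rpow_pos_of_pos hK3 _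
    have h2 : (lam₂ l₁) ^ 2 < l₁ ^ 2 := by
      have := hlt l₁ hl1
      nlinarith
    have h3 : 0 < l₁ * (lam₂ l₁) ^ 4 := by positivity
    exact mul_pos h1 (div_pos (by linarith) h3)
  -- σ 1 = 0
  have hσ1 : σ 1 = 0 := by
    simp only [σ, K₁, K₃, h21]
    norm_num [Real.one_rpow]
  -- lam₂ → atTop
  have hlow : ∀ l₁ : ℝ, 0 < l₁ →
      ((1 / 3) * l₁ ^ (2 * (1 - α))) ^ ((4 * (1 + α))⁻¹) ≤ lam₂ l₁ := by
    intro l₁ hl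
    have ht : 0 < lam₂ l₁ := hpos l₁ hl
    have h1 : (1 / 3) * l₁ ^ (2 * (1 - α)) ≤ (lam₂ l₁) ^ (4 * (1 + α)) := by
      have := hE l₁ hl
      have h2 : 0 ≤ (2 / 3) * l₁ ^ (-(2 * α)) * (lam₂ l₁) ^ 2 := by positivity
      linarith
    have h3 : (0:ℝ) ≤ (1 / 3) * l₁ ^ (2 * (1 - α)) := by positivity
    have h4 := Real.rpow_le_rpow h3 h1 (by positivity : (0:ℝ) ≤ (4 * (1 + α))⁻¹)
    rwa [← Real.rpow_mul ht.le,
      mul_inv_cancel₀ (by positivity : (4 * (1 + α) : ℝ) ≠ 0), Real.rpow_one] at h4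
  have hplam : Tendsto lam₂ atTop atTop := by
    have hq : (0:ℝ) < (4 * (1 + α))⁻¹ := by positivity
    have h2 : (0:ℝ) < 2 * (1 - α) := by nlinarith
    have inner : Tendsto (fun l₁ : ℝ => (1 / 3) * l₁ ^ (2 * (1 - α))) atTop atTop :=
      (tendsto_rpow_atTop h2).const_mul_atTop (by norm_num)
    have outer := (tendsto_rpow_atTop hq).comp inner
    exact tendsto_atTop_mono' atTop
      ((eventually_gt_atTop 0).mono fun l₁ hl => hlow l₁ hl) outer
  have hev1 : ∀ᶠ l₁ in atTop, (1:ℝ) ≤ lam₂ l₁ := hplam.eventually_ge_atTop 1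
  have hK3tend : Tendsto K₃ atTop atTop := by
    apply tendsto_atTop_mono' atTop ?_ tendsto_id
    filter_upwards [hev1, eventually_ge_atTop (1:ℝ)] with l₁ h1 h2
    show id l₁ ≤ K₃ l₁
    simp only [K₃, id]
    nlinarith [mul_nonneg (show (0:ℝ) ≤ l₁ by linarith)
      (show (0:ℝ) ≤ lam₂ l₁ ^ 2 - 1 by nlinarith)]
  have hub : ∀ᶠ l₁ in atTop, σ l₁ ≤ Real.sqrt 3 / (lam₂ l₁) ^ 2 := by
    filter_upwards [eventually_gt_atTop (0:ℝ)] with l₁ hl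
    have ht := hpos l₁ hl
    have hK3 : 0 < K₃ l₁ := by simp only [K₃]; positivity
    have hK1ge : l₁ ≤ K₁ l₁ := by
      simp only [K₁]
      rw [show l₁ = Real.sqrt (l₁ ^ 2) from (Real.sqrt_sq hl.le).symm]
      apply Real.sqrt_le_sqrt
      rw [Real.sqrt_sq hl.le]
      nlinarith
    have hK1pos : 0 < K₁ l₁ := lt_of_lt_of_le hl hK1ge
    have hterm2 : 0 < (K₃ l₁) ^ (-(α + 1)) := Real.rpow_pos_of_pos hK3 _
    have h1 : Real.sqrt 3 * l₁ ^ 2 / (K₁ l₁ * K₃ l₁) ≤ Real.sqrt 3 / (lam₂ l₁) ^ 2 := by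
      rw [div_le_div_iff₀ (by positivity) (by positivity)]
      have h2 : l₁ ^ 2 * (lam₂ l₁) ^ 2 ≤ K₁ l₁ * K₃ l₁ := by
        simp only [K₃]
        nlinarith [mul_le_mul_of_nonneg_right hK1ge
          (show (0:ℝ) ≤ l₁ * lam₂ l₁ ^ 2 by positivity)]
      have h3 := mul_le_mul_of_nonneg_left h2 (Real.sqrt_nonneg 3)
      linarith
    simp only [σ]
    linarith
  have hlb : ∀ᶠ l₁ in atTop, -(1 / K₃ l₁) ≤ σ l₁ := by
    filter_upwards [eventually_gt_atTop (0:ℝ), hK3tend.eventually_ge_atTop 1] with l₁ hl hK31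
    have ht := hpos l₁ hl
    have hK3 : 0 < K₃ l₁ := lt_of_lt_of_le one_pos hK31
    have hK1pos : 0 < K₁ l₁ := by
      simp only [K₁]
      exact Real.sqrt_pos.mpr (by positivity)
    have h1 : 0 ≤ Real.sqrt 3 * l₁ ^ 2 / (K₁ l₁ * K₃ l₁) := by positivity
    have h2 : (K₃ l₁) ^ (-(α + 1)) ≤ (K₃ l₁) ^ (-(1:ℝ)) :=
      Real.rpow_le_rpow_of_exponent_le hK31 (by linarith)
    rw [Real.rpow_neg_one] at h2
    simp only [σ]
    rw [one_div]
    linarith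
  have hlbt : Tendsto (fun l₁ => -(1 / K₃ l₁)) atTop (nhds 0) := by
    have h := hK3tend.inv_tendsto_atTop
    have := h.neg
    simpa [one_div] using this
  have hubt : Tendsto (fun l₁ => Real.sqrt 3 / (lam₂ l₁) ^ 2) atTop (nhds 0) := by
    apply Tendsto.div_atTop tendsto_const_nhds
    exact (tendsto_pow_atTop two_ne_zero).comp hplam
  have hσtend : Tendsto σ atTop (nhds 0) :=
    tendsto_of_tendsto_of_tendsto_of_le_of_le' hlbt hubt hlb hub
  refine ⟨h21, hσ1, hσtend, ⟨2, one_lt_two, hσpos 2 one_lt_two⟩, ?_⟩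
  have h2 := hσpos 2 one_lt_two
  obtain ⟨b, hb1, hb2⟩ :=
    ((hσtend.eventually (gt_mem_nhds h2)).and (eventually_gt_atTop 2)).exists
  exact ⟨2, b, one_lt_two, hb2, hb1⟩
end
end
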